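/- Let λ ∈ ℂ with λ_i = Im λ < 0, and let f : ℝ → H be continuous on (-∞, a] with ∫_{-∞}^a ‖f(s)‖² ds < ∞. Then the function u(t) = −i ∫_{-∞}^t e^{−iλ(t−s)} exp(i(t−s)A) f(s) ds is well defined and differentiable on (-∞, a] and satisfies i u'(t) + A u(t) = λ u(t) + f(t) for every t ≤ a; i.e., u solves the resolvent equation on the half-line (-∞, a] (part of the proof of Theorem 3.2). -/

import Mathlib

open MeasureTheory Set Complex
open scoped InnerProductSpace

/-- The operator exponential `exp(iτA)` for a bounded operator `A` and `τ ∈ ℝ`. -/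
noncomputable def expIA {H : Type*} [NormedAddCommGroup H] [InnerProductSpace ℂ H]
    [CompleteSpace H] (A : H →L[ℂ] H) (τ : ℝ) : H →L[ℂ] H :=
  NormedSpace.exp ((Complex.I * (τ : ℂ)) • A)

/-!
The kernel factors as `e^{-iλ(t-s)} exp(i(t-s)A) = e^{-iλt} exp(itA) · e^{iλs} exp(-isA)`, so
`u(t) = -i e^{-iλt} exp(itA) ∫_{-∞}^t g` with `g(s) = e^{iλs} exp(-isA) f(s)`.
Since `exp(-isA)` is unitary and `|e^{iλs}| = e^{-(Im λ) s}` is square integrable on `(-∞, a]`,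
`g` is integrable there by Cauchy–Schwarz. The fundamental theorem of calculus and the product
rule then give `u' = -iλ u + i A u - i f`.
-/

theorem MeasureTheory.Integrable.smul_of_integrable_sq_norm {α 𝕜 E : Type*}
    [MeasurableSpace α] {μ : Measure α} [NormedField 𝕜] [NormedAddCommGroup E] [NormedSpace 𝕜 E]
    {φ : α → 𝕜} {v : α → E} (hφ : AEStronglyMeasurable φ μ) (hv : AEStronglyMeasurable v μ)
    (hφ2 : Integrable (fun x => ‖φ x‖ ^ 2) μ) (hv2 : Integrable (fun x => ‖v x‖ ^ 2) μ) :
    Integrable (fun x => φ x • v x) μ :=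
  memLp_one_iff_integrable.mp <|
    ((memLp_two_iff_integrable_sq_norm hv).2 hv2).smul
      ((memLp_two_iff_integrable_sq_norm hφ).2 hφ2)

theorem hasDerivWithinAt_setIntegral_Iio {E : Type*} [NormedAddCommGroup E] [NormedSpace ℝ E]
    [CompleteSpace E] {g : ℝ → E} {a t : ℝ} (hgi : IntegrableOn g (Iic a))
    (hgc : ContinuousOn g (Iic a)) (ht : t ≤ a) :
    HasDerivWithinAt (fun x => ∫ s in Iio x, g s) (g t) (Iic a) t := by
  have hsplit : ∀ x ∈ Iic a, ∫ s in Iio x, g s = (∫ s in Iio a, g s) + ∫ s in a..x, g s :=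
    fun x hx => by
      rw [← intervalIntegral.integral_Iio_sub_Iio' (hgi.mono_set (Iio_subset_Iic_self.trans
        (Iic_subset_Iic.2 hx))) (hgi.mono_set Iio_subset_Iic_self)]
      abel
  have hii : IntervalIntegrable g volume a t := by
    rw [intervalIntegrable_iff, uIoc_of_ge ht]
    exact hgi.mono_set Ioc_subset_Iic_self
  have hmeas := hgc.aestronglyMeasurable (μ := volume) measurableSet_Iic
  have hderiv : HasDerivWithinAt (fun x => ∫ s in a..x, g s) (g t) (Iic a) t := by
    rcases ht.eq_or_lt with rfl | hlt
    · exact intervalIntegral.integral_hasDerivWithinAt_right hii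
        ⟨Iic t, self_mem_nhdsWithin, hmeas⟩ (hgc t self_mem_Iic)
    · exact (intervalIntegral.integral_hasDerivAt_right hii ⟨Iic a, Iic_mem_nhds hlt, hmeas⟩
        (hgc.continuousAt (Iic_mem_nhds hlt))).hasDerivWithinAt
  exact (hderiv.const_add _).congr hsplit (hsplit t ht)

section expIA

variable {H : Type*} [NormedAddCommGroup H] [InnerProductSpace ℂ H] [CompleteSpace H]
  (A : H →L[ℂ] H)

theorem expIA_add (σ τ : ℝ) : expIA A (σ + τ) = expIA A σ * expIA A τ := by
  let _ : NormedAlgebra ℚ (H →L[ℂ] H) := .restrictScalars ℚ ℂ _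
  rw [expIA, expIA, expIA, ← NormedSpace.exp_add_of_commute
    (((Commute.refl A).smul_right _).smul_left _), ← add_smul, ofReal_add, mul_add]

theorem expIA_apply_expIA_neg_apply (τ : ℝ) (x : H) : expIA A τ (expIA A (-τ) x) = x := by
  change (expIA A τ * expIA A (-τ)) x = x
  rw [← expIA_add, add_neg_cancel]
  simp [expIA]

theorem expIA_mem_unitary (hA : IsSelfAdjoint A) (τ : ℝ) :
    expIA A τ ∈ unitary (H →L[ℂ] H) := by
  let _ : NormedAlgebra ℚ (H →L[ℂ] H) := .restrictScalars ℚ ℂ _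
  refine NormedSpace.exp_mem_unitary_of_mem_skewAdjoint (hA.smul_mem_skewAdjoint ?_)
  simp [skewAdjoint.mem_iff, conj_I]

theorem norm_expIA_apply (hA : IsSelfAdjoint A) (τ : ℝ) (x : H) : ‖expIA A τ x‖ = ‖x‖ :=
  ContinuousLinearMap.norm_map_of_mem_unitary (expIA_mem_unitary A hA τ) x

theorem hasDerivAt_expIA (t : ℝ) :
    HasDerivAt (fun τ => expIA A τ) (I • (A * expIA A t)) t := by
  have hlin : HasDerivAt (fun τ : ℝ => I * (τ : ℂ)) I t := by
    simpa using ((hasDerivAt_id (t : ℂ)).const_mul I).comp_ofReal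
  simpa [Function.comp_def, expIA] using (hasDerivAt_exp_smul_const' A (I * t)).scomp t hlin

theorem continuous_expIA : Continuous (expIA A) :=
  continuous_iff_continuousAt.2 fun t => (hasDerivAt_expIA A t).continuousAt

theorem HasDerivWithinAt.expIA_apply {F : ℝ → H} {F' : H} {s : Set ℝ} {t : ℝ}
    (hF : HasDerivWithinAt F F' s t) :
    HasDerivWithinAt (fun y => expIA A y (F y)) (I • A (expIA A t (F t)) + expIA A t F') s t := by
  have hE := (ContinuousLinearMap.restrictScalarsL ℂ H H ℝ ℝ).hasFDerivAt.comp_hasDerivAt t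
    (hasDerivAt_expIA A t)
  simpa using hE.hasDerivWithinAt.clm_apply hF

theorem exp_smul_expIA_sub_apply (lam : ℂ) (t s : ℝ) (x : H) :
    exp (-I * lam * (t - s)) • expIA A (t - s) x
      = exp (-I * lam * t) • expIA A t (exp (I * lam * s) • expIA A (-s) x) := by
  rw [map_smul, smul_smul, ← Complex.exp_add, sub_eq_add_neg t s, expIA_add]
  congr 1
  ring_nf

theorem integrableOn_exp_smul_expIA_neg_apply (hA : IsSelfAdjoint A) {lam : ℂ}
    (hlam : lam.im < 0) {f : ℝ → H} {a : ℝ} (hf : AEStronglyMeasurable f (volume.restrict (Iic a)))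
    (hfL2 : IntegrableOn (fun s => ‖f s‖ ^ 2) (Iic a)) :
    IntegrableOn (fun s : ℝ => exp (I * lam * s) • expIA A (-s) (f s)) (Iic a) := by
  have hexp : IntegrableOn (fun s : ℝ => exp (2 * (I * lam) * s)) (Iic a) :=
    integrableOn_exp_mul_complex_Iic (by simp [mul_re]; linarith) a
  refine Integrable.smul_of_integrable_sq_norm (by fun_prop)
    ((continuous_fst.clm_apply continuous_snd).comp_aestronglyMeasurable₂
      ((continuous_expIA A).comp continuous_neg).aestronglyMeasurable hf)
    (IntegrableOn.congr_fun hexp.norm (fun s _ => ?_) measurableSet_Iic) ?_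
  · rw [← norm_pow, ← Complex.exp_nat_mul]
    ring_nf
  · simp only [norm_expIA_apply A hA]
    exact hfL2

theorem hasDerivWithinAt_of_eq_smul_expIA_setIntegral {lam : ℂ} {f w : ℝ → H} {a t : ℝ}
    (hg : IntegrableOn (fun s : ℝ => exp (I * lam * s) • expIA A (-s) (f s)) (Iic a))
    (hfc : ContinuousOn f (Iic a))
    (hw : ∀ y ∈ Iic a, w y = (-I * exp (-I * lam * y)) •
      expIA A y (∫ s in Iio y, exp (I * lam * s) • expIA A (-s) (f s)))
    (ht : t ∈ Iic a) :
    HasDerivWithinAt w ((-I * lam) • w t + I • A (w t) - I • f t) (Iic a) t := by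
  set g : ℝ → H := fun s => exp (I * lam * s) • expIA A (-s) (f s)
  have hgc : ContinuousOn g (Iic a) :=
    (Continuous.continuousOn (by fun_prop)).smul
      (((continuous_expIA A).comp continuous_neg).continuousOn.clm_apply hfc)
  have hc : HasDerivAt (fun y : ℝ => -I * exp (-I * lam * y))
      (-I * exp (-I * lam * t) * (-I * lam)) t :=
    (((hasDerivAt_id (t : ℂ)).const_mul (-I * lam)).cexp.const_mul (-I)).comp_ofReal
      |>.congr_deriv (by simp only [id, mul_one]; ring)
  have hd := (hc.hasDerivWithinAt.smul
    ((hasDerivWithinAt_setIntegral_Iio hg hgc ht).expIA_apply A)).congr hw (hw t ht)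
  convert hd using 1
  have hEg : expIA A t (g t) = exp (I * lam * t) • f t := by
    simp only [g, map_smul, expIA_apply_expIA_neg_apply]
  have hexp : exp (-I * lam * t) * exp (I * lam * t) = 1 := by
    rw [← Complex.exp_add, neg_mul, neg_mul, neg_add_cancel, Complex.exp_zero]
  rw [hw t ht, hEg]
  simp only [map_smul, smul_add, smul_smul]
  match_scalars
  · ring
  · ring
  · linear_combination I * hexp

end expIA

/-- For `Im λ < 0` and `f` continuous on `(-∞, a]` with `∫_{-∞}^a ‖f‖² < ∞`, the function
`u(t) = −i ∫_{-∞}^t e^{−iλ(t−s)} exp(i(t−s)A) f(s) ds` is well defined and differentiable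
on `(-∞, a]` and solves `i u' + A u = λ u + f` there (part of the proof of Theorem 3.2). -/
theorem resolvent_solution_left_halfline
    {H : Type*} [NormedAddCommGroup H] [InnerProductSpace ℂ H] [CompleteSpace H]
    (A : H →L[ℂ] H) (hA : IsSelfAdjoint A) (a : ℝ) (lam : ℂ) (hlam : lam.im < 0)
    (f : ℝ → H) (hfc : ContinuousOn f (Set.Iic a))
    (hfL2 : IntegrableOn (fun s : ℝ => ‖f s‖ ^ 2) (Set.Iic a) volume)
    (u : ℝ → H)
    (hu : u = fun t : ℝ => (-Complex.I) • ∫ s in Set.Iio t,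
      Complex.exp (-Complex.I * lam * ((t : ℂ) - (s : ℂ))) • (expIA A (t - s)) (f s)) :
    (∀ t ∈ Set.Iic a,
      IntegrableOn (fun s : ℝ =>
        Complex.exp (-Complex.I * lam * ((t : ℂ) - (s : ℂ))) • (expIA A (t - s)) (f s))
        (Set.Iio t) volume)
    ∧ ∃ u' : ℝ → H, ∀ t ∈ Set.Iic a,
        HasDerivWithinAt u (u' t) (Set.Iic a) t
        ∧ Complex.I • u' t + A (u t) = lam • u t + f t := by
  set g : ℝ → H := fun s => exp (I * lam * s) • expIA A (-s) (f s)
  have hg : IntegrableOn g (Iic a) :=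
    integrableOn_exp_smul_expIA_neg_apply A hA hlam
      (hfc.aestronglyMeasurable measurableSet_Iic) hfL2
  have hg_Iio : ∀ t ∈ Iic a, IntegrableOn g (Iio t) := fun t ht =>
    hg.mono_set (Iio_subset_Iic_self.trans (Iic_subset_Iic.2 ht))
  have hu_eq : ∀ t ∈ Iic a,
      u t = (-I * exp (-I * lam * t)) • expIA A t (∫ s in Iio t, g s) := by
    intro t ht
    simp_rw [hu, exp_smul_expIA_sub_apply, integral_smul,
      ← (expIA A t).integral_comp_comm (hg_Iio t ht), smul_smul]
    rfl
  refine ⟨fun t ht => ?_, fun t => (-I * lam) • u t + I • A (u t) - I • f t,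
    fun t ht => ⟨hasDerivWithinAt_of_eq_smul_expIA_setIntegral A hg hfc hu_eq ht, ?_⟩⟩
  · simp_rw [exp_smul_expIA_sub_apply]
    exact ((expIA A t).integrable_comp (hg_Iio t ht)).smul _
  · match_scalars <;> ring_nf <;> simp [I_sq]
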